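/- arXiv:2505.07529 — 3 statements merged into one kernel-verified Lean document; each statement's English description precedes it below -/
import Mathlib

section
/- Let R be a commutative Noetherian integrally closed domain (equivalently, a Noetherian Krull domain) and let S = R[[t]] be the ring of formal power series in one variable over R. Let M be a finitely generated S-module that is S-torsion, and suppose the quotient module M/tM is a torsion R-module. Then the t-power-torsion submodule M_t = { m ∈ M : t^n • m = 0 for some n ≥ 1 } is a finitely generated torsion R-module. -/
/-- The `t`-power-torsion submodule `M_t = {m ∈ M : t^n • m = 0 for some n ≥ 1}` of a module
`M` over `S = R[[t]]`, viewed as an `R`-submodule of `M` (here `t = PowerSeries.X`). -/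
def tPowerTorsion (R : Type*) [CommRing R] (M : Type*) [AddCommGroup M]
    [Module R M] [Module (PowerSeries R) M] [IsScalarTower R (PowerSeries R) M] :
    Submodule R M where
  carrier := {m | ∃ n : ℕ, 1 ≤ n ∧ (PowerSeries.X : PowerSeries R) ^ n • m = 0}
  zero_mem' := ⟨1, le_refl 1, smul_zero _⟩
  add_mem' := by
    rintro a b ⟨n, hn, ha⟩ ⟨k, hk, hb⟩
    refine ⟨n + k, le_trans hn (Nat.le_add_right n k), ?_⟩
    have ha' : (PowerSeries.X : PowerSeries R) ^ (n + k) • a = 0 := by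
      rw [pow_add, mul_comm, mul_smul, ha, smul_zero]
    have hb' : (PowerSeries.X : PowerSeries R) ^ (n + k) • b = 0 := by
      rw [pow_add, mul_smul, hb, smul_zero]
    rw [smul_add, ha', hb', add_zero]
  smul_mem' := by
    rintro r m ⟨n, hn, hm⟩
    exact ⟨n, hn, by rw [smul_comm, hm, smul_zero]⟩

/-!
`R⟦X⟧` is Noetherian, so the ascending chain of `X ^ k`-torsion submodules of `M` stabilizes and
`M_t` is killed by a single power `X ^ n`. A finitely generated `R⟦X⟧`-module killed by
`X ^ n` is spanned over `R` by the `X ^ i • g` with `i < n` and `g` a generator. For torsion,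
`M/XM` being `R`-torsion means every `m` satisfies `s • m = X • m'` with `s ∈ R⁰`; iterating
`n` times inside `M_t` gives `r • m = X ^ n • m''` with `m'' ∈ M_t`, which vanishes.
-/

open PowerSeries Submodule
open scoped nonZeroDivisors

theorem exists_pow_smul_eq_zero_of_isNoetherian {A M : Type*} [CommRing A] [AddCommGroup M]
    [Module A M] [IsNoetherian A M] (a : A) :
    ∃ n, ∀ (k : ℕ) (m : M), a ^ k • m = 0 → a ^ n • m = 0 := by
  obtain ⟨n, hn⟩ : ∃ n, ∀ k, n ≤ k → torsionBy A M (a ^ n) = torsionBy A M (a ^ k) :=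
    monotone_stabilizes_iff_noetherian.mpr ‹_›
      ⟨fun k ↦ torsionBy A M (a ^ k),
        fun _ _ h ↦ torsionBy_le_torsionBy_of_dvd _ _ (pow_dvd_pow a h)⟩
  refine ⟨n, fun k m hm ↦ ?_⟩
  have hmax : m ∈ torsionBy A M (a ^ max n k) :=
    torsionBy_le_torsionBy_of_dvd _ _ (pow_dvd_pow a (le_max_right n k)) hm
  rwa [← hn _ (le_max_left n k)] at hmax

section PowerSeriesModule

variable {R W : Type*} [CommRing R] [AddCommGroup W] [Module R W] [Module R⟦X⟧ W]
  [IsScalarTower R R⟦X⟧ W]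

theorem PowerSeries.smul_eq_sum_coeff_smul_X_pow_smul {n : ℕ} (f : R⟦X⟧) {w : W}
    (hw : (X : R⟦X⟧) ^ n • w = 0) :
    f • w = ∑ i ∈ Finset.range n, coeff i f • ((X : R⟦X⟧) ^ i • w) := by
  conv_lhs => rw [eq_X_pow_mul_shift_add_trunc n f]
  rw [add_smul, mul_comm, mul_smul, hw, smul_zero, zero_add, trunc_apply,
    ← Polynomial.coeToPowerSeries.ringHom_apply, map_sum,
    Finset.sum_smul, Finset.range_eq_Ico]
  refine Finset.sum_congr rfl fun i _ ↦ ?_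
  rw [Polynomial.coeToPowerSeries.ringHom_apply, Polynomial.coe_monomial,
    monomial_eq_C_mul_X_pow, mul_smul, ← algebraMap_eq, algebraMap_smul]

theorem PowerSeries.restrictScalars_span_eq_span_X_pow_smul {n : ℕ} (G : Set W)
    (hG : ∀ g ∈ G, (X : R⟦X⟧) ^ n • g = 0) :
    (span R⟦X⟧ G).restrictScalars R =
      span R (⋃ i ∈ Finset.range n, ((X : R⟦X⟧) ^ i • ·) '' G) := by
  refine le_antisymm (fun w hw ↦ ?_) (span_le.mpr ?_)
  · obtain ⟨k, f, g, rfl⟩ := mem_span_set'.mp hw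
    refine sum_mem fun j _ ↦ ?_
    rw [smul_eq_sum_coeff_smul_X_pow_smul (f j) (hG _ (g j).2)]
    refine sum_mem fun i hi ↦ smul_mem _ _ (subset_span ?_)
    exact Set.mem_biUnion hi ⟨g j, (g j).2, rfl⟩
  · simp only [Set.iUnion_subset_iff]
    rintro i - _ ⟨g, hg, rfl⟩
    exact smul_mem _ _ (subset_span hg)

theorem PowerSeries.fg_restrictScalars_of_smul_X_pow_eq_zero {n : ℕ} {N : Submodule R⟦X⟧ W}
    (hN : N.FG) (hkill : ∀ w ∈ N, (X : R⟦X⟧) ^ n • w = 0) : (N.restrictScalars R).FG := by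
  obtain ⟨G, rfl⟩ := hN
  rw [PowerSeries.restrictScalars_span_eq_span_X_pow_smul _ fun g hg ↦ hkill g (subset_span hg)]
  exact fg_span (Set.Finite.biUnion (Finset.finite_toSet _) fun _ _ ↦ G.finite_toSet.image _)

theorem PowerSeries.exists_smul_eq_X_smul_of_isTorsion_quotient
    (hquot : Module.IsTorsion R
      (W ⧸ LinearMap.range ((LinearMap.lsmul R⟦X⟧ W (X : R⟦X⟧)).restrictScalars R)))
    (m : W) : ∃ (s : R⁰) (m' : W), (s : R) • m = (X : R⟦X⟧) • m' := by
  obtain ⟨s, hs⟩ := @hquot (Submodule.Quotient.mk m)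
  rw [← Quotient.mk_smul, Quotient.mk_eq_zero] at hs
  obtain ⟨m', hm'⟩ := hs
  exact ⟨s, m', hm'.symm⟩

theorem PowerSeries.exists_smul_eq_X_pow_smul
    (hdiv : ∀ m : W, ∃ (s : R⁰) (m' : W), (s : R) • m = (X : R⟦X⟧) • m')
    {j : ℕ} {m : W} (hm : (X : R⟦X⟧) ^ j • m = 0) (k : ℕ) :
    ∃ (r : R⁰) (m' : W),
      (X : R⟦X⟧) ^ (j + k) • m' = 0 ∧ (r : R) • m = (X : R⟦X⟧) ^ k • m' := by
  induction k with
  | zero => exact ⟨1, m, hm, by simp⟩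
  | succ k ih =>
    obtain ⟨r, m', hm', hrm⟩ := ih
    obtain ⟨s, m'', hsm⟩ := hdiv m'
    refine ⟨s * r, m'', ?_, ?_⟩
    · rw [← add_assoc, pow_succ, mul_smul, ← hsm, smul_comm, hm', smul_zero]
    · rw [Submonoid.coe_mul, mul_smul, hrm, smul_comm, hsm, ← mul_smul, ← pow_succ]

end PowerSeriesModule

theorem tPowerTorsion_fg_and_isTorsion_general
    (R : Type*) [CommRing R] [IsNoetherianRing R]
    (M : Type*) [AddCommGroup M] [Module R M] [Module (PowerSeries R) M]
    [IsScalarTower R (PowerSeries R) M]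
    [Module.Finite (PowerSeries R) M]
    (hquot : Module.IsTorsion R
      (M ⧸ LinearMap.range
        ((LinearMap.lsmul (PowerSeries R) M (PowerSeries.X : PowerSeries R)).restrictScalars R))) :
    (tPowerTorsion R M).FG ∧ Module.IsTorsion R (tPowerTorsion R M) := by
  obtain ⟨n, hn⟩ := exists_pow_smul_eq_zero_of_isNoetherian (M := M) (X : R⟦X⟧)
  have hMt : tPowerTorsion R M = (torsionBy R⟦X⟧ M (X ^ n)).restrictScalars R := by
    ext m
    refine ⟨fun ⟨k, _, hk⟩ ↦ hn k m hk, fun hm ↦ ⟨n + 1, n.succ_pos, ?_⟩⟩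
    rw [pow_succ', mul_smul, (mem_torsionBy_iff _ _).mp hm, smul_zero]
  refine ⟨hMt ▸ fg_restrictScalars_of_smul_X_pow_eq_zero (IsNoetherian.noetherian _)
    fun _ ↦ (mem_torsionBy_iff _ _).mp, ?_⟩
  rintro ⟨m, k, -, hk⟩
  obtain ⟨r, m', hm', hrm⟩ :=
    exists_smul_eq_X_pow_smul (exists_smul_eq_X_smul_of_isTorsion_quotient hquot) hk n
  exact ⟨r, Subtype.ext (hrm.trans (hn _ m' hm'))⟩

/-- Let `R` be a commutative Noetherian integrally closed domain and
`S = R[[t]]`.  If `M` is a finitely generated torsion `S`-module such that `M/tM` is a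
torsion `R`-module, then the `t`-power-torsion submodule `M_t` is a finitely generated
torsion `R`-module. -/
theorem tPowerTorsion_fg_and_isTorsion
    (R : Type*) [CommRing R] [IsDomain R] [IsNoetherianRing R] [IsIntegrallyClosed R]
    (M : Type*) [AddCommGroup M] [Module R M] [Module (PowerSeries R) M]
    [IsScalarTower R (PowerSeries R) M]
    [Module.Finite (PowerSeries R) M]
    (htor : Module.IsTorsion (PowerSeries R) M)
    (hquot : Module.IsTorsion R
      (M ⧸ LinearMap.range
        ((LinearMap.lsmul (PowerSeries R) M (PowerSeries.X : PowerSeries R)).restrictScalars R))) :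
    (tPowerTorsion R M).FG ∧ Module.IsTorsion R (tPowerTorsion R M) :=
  tPowerTorsion_fg_and_isTorsion_general R M hquot
end

section
/- Let p be a prime, ℤ_p the ring of p-adic integers, and Λ = ℤ_p[[X]] the ring of formal power series in one variable over ℤ_p. Let M be a finitely generated Λ-module which is Λ-torsion-free (no nonzero element of M is annihilated by a nonzero element of Λ). Then M is a free Λ-module if and only if the quotient M/XM is a torsion-free (equivalently, finite free) ℤ_p-module. -/
/-!
Since `ℤ_p⟦X⟧` is noetherian, `M` is finitely presented, and `X` is an `M`-regular element of
the Jacobson radical. For such an element, Nakayama's lemma lifts a basis of `M/XM` over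
`ℤ_p⟦X⟧/(X) ≅ ℤ_p` to a basis of `M`, so `M` is free iff `M/XM` is a free `ℤ_p`-module.
As `ℤ_p` is a PID and `M/XM` is finitely generated, this holds iff `M/XM` is torsion-free.
-/

open PowerSeries Pointwise

theorem LinearMap.range_lsmul {A M : Type*} [CommRing A] [AddCommGroup M] [Module A M] (a : A) :
    LinearMap.range (LinearMap.lsmul A M a) = a • ⊤ := by
  rw [LinearMap.range_eq_map]
  rfl

theorem noZeroSMulDivisors_iff_isTorsionFree {R M : Type*} [Ring R] [IsDomain R]
    [AddCommGroup M] [Module R M] : NoZeroSMulDivisors R M ↔ Module.IsTorsionFree R M :=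
  ⟨fun _ ↦ inferInstance, fun _ ↦ ⟨smul_eq_zero.mp⟩⟩

namespace PowerSeries

variable (R : Type*) [CommRing R]

theorem X_mem_jacobson_bot : (X : R⟦X⟧) ∈ (⊥ : Ideal R⟦X⟧).jacobson :=
  Ideal.mem_jacobson_bot.mpr fun _ ↦ isUnit_iff_constantCoeff.mpr (by simp)

theorem ker_constantCoeff : RingHom.ker (constantCoeff (R := R)) = Ideal.span {X} := by
  ext f
  rw [RingHom.mem_ker, Ideal.mem_span_singleton, X_dvd_iff]

noncomputable def quotientSpanXEquiv : R⟦X⟧ ⧸ Ideal.span {(X : R⟦X⟧)} ≃+* R :=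
  (Ideal.quotEquivOfEq (ker_constantCoeff R).symm).trans
    (RingHom.quotientKerEquivOfSurjective (constantCoeff_surj (R := R)))

variable {R} {M : Type*} [AddCommGroup M] [Module R M] [Module R⟦X⟧ M] [IsScalarTower R R⟦X⟧ M]

theorem smul_quotSMulTop_X_eq_constantCoeff_smul (f : R⟦X⟧) (q : QuotSMulTop (X : R⟦X⟧) M) :
    f • q = constantCoeff f • q := by
  obtain ⟨g, hg⟩ : X ∣ f - C (constantCoeff f) := X_dvd_iff.mpr (by simp)
  induction q using Submodule.Quotient.induction_on with | H m => ?_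
  rw [sub_eq_iff_eq_add'] at hg
  nth_rw 1 [hg]
  rw [add_smul, mul_smul, Module.isTorsionBy_quotient_element_smul M X, add_zero,
    C_eq_algebraMap, algebraMap_smul]

theorem free_quotSMulTop_X_iff :
    Module.Free (R⟦X⟧ ⧸ Ideal.span {(X : R⟦X⟧)}) (QuotSMulTop (X : R⟦X⟧) M) ↔
      Module.Free R (QuotSMulTop (X : R⟦X⟧) M) := by
  have := RingHomInvPair.of_ringEquiv (quotientSpanXEquiv R)
  have := RingHomInvPair.of_ringEquiv_symm (quotientSpanXEquiv R)
  refine Module.Free.iff_of_equiv (σ := (quotientSpanXEquiv R : _ →+* R))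
    { AddEquiv.refl _ with map_smul' := fun f q ↦ ?_ }
  induction f using Submodule.Quotient.induction_on with | H f => ?_
  exact smul_quotSMulTop_X_eq_constantCoeff_smul f q

theorem finite_quotSMulTop_X [Module.Finite R⟦X⟧ M] :
    Module.Finite R (QuotSMulTop (X : R⟦X⟧) M) :=
  Module.Finite.of_surjective (σ := constantCoeff)
    { (Submodule.mkQ _).toAddMonoidHom with
      map_smul' := fun f m ↦
        smul_quotSMulTop_X_eq_constantCoeff_smul f (Submodule.Quotient.mk m) }
    (Submodule.mkQ_surjective _)

theorem free_iff_free_quotSMulTop_X [Module.FinitePresentation R⟦X⟧ M]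
    (hX : IsSMulRegular M (X : R⟦X⟧)) :
    Module.Free R⟦X⟧ M ↔ Module.Free R (QuotSMulTop (X : R⟦X⟧) M) :=
  (Module.free_quotSMulTop_iff_free _ _ (X_mem_jacobson_bot R) hX).symm.trans
    free_quotSMulTop_X_iff

end PowerSeries

/-- Let `Λ = ℤ_p[[X]]` and let `M` be a finitely generated torsion-free
`Λ`-module.  Then `M` is a free `Λ`-module if and only if `M/XM` is a torsion-free
`ℤ_p`-module. -/
theorem free_iff_quotient_torsionFree (p : ℕ) [Fact p.Prime]
    (M : Type*) [AddCommGroup M] [Module (PadicInt p) M]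
    [Module (PowerSeries (PadicInt p)) M]
    [IsScalarTower (PadicInt p) (PowerSeries (PadicInt p)) M]
    [Module.Finite (PowerSeries (PadicInt p)) M]
    [NoZeroSMulDivisors (PowerSeries (PadicInt p)) M] :
    Module.Free (PowerSeries (PadicInt p)) M ↔
      NoZeroSMulDivisors (PadicInt p)
        (M ⧸ LinearMap.range
          ((LinearMap.lsmul (PowerSeries (PadicInt p)) M
            (PowerSeries.X : PowerSeries (PadicInt p))).restrictScalars (PadicInt p))) := by
  rw [LinearMap.range_restrictScalars, LinearMap.range_lsmul]
  let e := Submodule.Quotient.restrictScalarsEquiv ℤ_[p]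
    ((X : ℤ_[p]⟦X⟧) • (⊤ : Submodule ℤ_[p]⟦X⟧ M))
  have := PowerSeries.finite_quotSMulTop_X (R := ℤ_[p]) (M := M)
  have := Module.Finite.equiv e.symm
  have := Module.finitePresentation_of_finite ℤ_[p]⟦X⟧ M
  rw [noZeroSMulDivisors_iff_isTorsionFree, ← Module.free_iff_isTorsionFree,
    Module.Free.iff_of_equiv e, PowerSeries.free_iff_free_quotSMulTop_X (.of_ne_zero X_ne_zero)]
end

section
/- Let p be a prime, ℤ_p the ring of p-adic integers, and Λ = ℤ_p[[X]] the ring of formal power series in one variable over ℤ_p. Let M be a finitely generated Λ-module such that the quotient M/XM is finite (as a set). Then M is a torsion Λ-module, i.e. every element of M is annihilated by some nonzero element of Λ. -/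
/-!
Let `n = #(M/XM)`. Then `nM ⊆ XM`, and the Cayley–Hamilton (determinant) trick applied to
multiplication by `n` yields an annihilator `d = nᵏ + a₁nᵏ⁻¹ + ⋯ + aₖ` of `M` with all `aᵢ ∈ (X)`.
Its constant coefficient `nᵏ` is a non-zero-divisor of the coefficient ring, hence so is `d`.
-/

open PowerSeries Polynomial
open scoped nonZeroDivisors

theorem Submodule.card_quotient_nsmul_mem {R M : Type*} [Ring R] [AddCommGroup M] [Module R M]
    (N : Submodule R M) (m : M) : Nat.card (M ⧸ N) • m ∈ N := by
  rw [← Submodule.Quotient.mk_eq_zero, Submodule.Quotient.mk_smul, card_nsmul_eq_zero']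

theorem Module.exists_sub_pow_mem_of_range_lsmul_le_smul {A M : Type*} [CommRing A]
    [AddCommGroup M] [Module A M] [Module.Finite A M] {I : Ideal A} {r : A}
    (h : LinearMap.range (LinearMap.lsmul A M r) ≤ I • ⊤) :
    ∃ k : ℕ, ∃ d ∈ Module.annihilator A M, d - r ^ k ∈ I := by
  obtain ⟨q, hmonic, -, hcoeff, hq⟩ :=
    LinearMap.exists_monic_and_natDegree_eq_and_coeff_mem_pow_and_aeval_eq_zero A _ I h
  refine ⟨q.natDegree, q.eval r, ?_, ?_⟩
  · have hr : LinearMap.lsmul A M r = algebraMap A (Module.End A M) r := by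
      ext m; simp [Module.algebraMap_end_apply]
    rw [hr, aeval_algebraMap_apply, coe_aeval_eq_eval] at hq
    exact Module.mem_annihilator.2 fun m => by
      simpa [Module.algebraMap_end_apply] using LinearMap.congr_fun hq m
  · rw [eval_eq_sum_range, Finset.sum_range_succ, hmonic.coeff_natDegree, one_mul,
      add_sub_cancel_right]
    refine Ideal.sum_mem _ fun i hi => Ideal.mul_mem_right _ _ ?_
    exact Ideal.pow_le_self (Nat.sub_ne_zero_of_lt (Finset.mem_range.1 hi)) (hcoeff i)

theorem natCast_mem_nonZeroDivisors {R : Type*} [CommRing R] [IsAddTorsionFree R] {n : ℕ}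
    (hn : n ≠ 0) : (n : R) ∈ R⁰ :=
  mem_nonZeroDivisors_iff_right.2 fun x hx =>
    nsmul_right_injective hn (by simpa [nsmul_eq_mul, mul_comm] using hx)

theorem PowerSeries.mem_nonZeroDivisors_of_sub_natCast_pow_mem_span_X {R : Type*} [CommRing R]
    [IsAddTorsionFree R] {d : R⟦X⟧} {n k : ℕ} (hn : n ≠ 0)
    (hd : d - (n : R⟦X⟧) ^ k ∈ Ideal.span {X}) : d ∈ R⟦X⟧⁰ := by
  rw [Ideal.mem_span_singleton, X_dvd_iff, map_sub, sub_eq_zero, map_pow, map_natCast] at hd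
  exact MvPowerSeries.mem_nonZeroDivisors_of_constantCoeff
    (hd ▸ pow_mem (natCast_mem_nonZeroDivisors hn) k)

theorem PowerSeries.isTorsion_of_finite_quotient_range_lsmul_X {R M : Type*} [CommRing R]
    [IsAddTorsionFree R] [AddCommGroup M] [Module R⟦X⟧ M] [Module.Finite R⟦X⟧ M]
    [Finite (M ⧸ LinearMap.range (LinearMap.lsmul R⟦X⟧ M X))] :
    Module.IsTorsion R⟦X⟧ M := by
  set N := LinearMap.range (LinearMap.lsmul R⟦X⟧ M X)
  have hn : Nat.card (M ⧸ N) ≠ 0 := Nat.card_pos.ne'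
  have hle : LinearMap.range (LinearMap.lsmul R⟦X⟧ M (Nat.card (M ⧸ N) : R⟦X⟧)) ≤
      Ideal.span {(X : R⟦X⟧)} • ⊤ := by
    rintro _ ⟨m, rfl⟩
    obtain ⟨m', hm'⟩ := N.card_quotient_nsmul_mem m
    rw [LinearMap.lsmul_apply, Nat.cast_smul_eq_nsmul, ← hm']
    exact Submodule.smul_mem_smul (Ideal.mem_span_singleton_self X) trivial
  obtain ⟨k, d, hd_ann, hd⟩ := Module.exists_sub_pow_mem_of_range_lsmul_le_smul hle
  exact fun m => ⟨⟨d, mem_nonZeroDivisors_of_sub_natCast_pow_mem_span_X hn hd⟩,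
    Module.mem_annihilator.1 hd_ann m⟩

/-- Let `Λ = ℤ_p[[X]]` and let `M` be a finitely generated `Λ`-module
such that `M/XM` is finite.  Then `M` is a torsion `Λ`-module. -/
theorem isTorsion_of_quotient_finite (p : ℕ) [Fact p.Prime]
    (M : Type*) [AddCommGroup M] [Module (PowerSeries (PadicInt p)) M]
    [Module.Finite (PowerSeries (PadicInt p)) M]
    (hfin : Finite (M ⧸ LinearMap.range
      (LinearMap.lsmul (PowerSeries (PadicInt p)) M
        (PowerSeries.X : PowerSeries (PadicInt p))))) :
    Module.IsTorsion (PowerSeries (PadicInt p)) M :=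
  PowerSeries.isTorsion_of_finite_quotient_range_lsmul_X
end
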